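/- Let G be a finite connected simple graph on vertex set V with N = |V| ≥ 3 vertices, and let (s,t) be a uniformly random ordered pair of distinct vertices with a uniformly chosen shortest path between them. Then for every vertex i, the ratio of the expected number of visits of the path to i away from its origin, to the expected length d(s,t) of the path, equals b_i' / Σ_{j∈V} b_j'. In other words, the per-trip visit rate of the taxi drive at vertex i is the normalized adjusted betweenness of i. -/
import Mathlib


open SimpleGraph Finset

/-- The number `σ_{st}` of shortest paths (walks of length `G.dist s t`) from `s` to `t`. -/
noncomputable def numSP {V : Type*} [Fintype V] [DecidableEq V] (G : SimpleGraph V)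
    [DecidableRel G.Adj] (s t : V) : ℕ :=
  (G.finsetWalkLength (G.dist s t) s t).card

/-- The number `σ_{st}(i)` of shortest paths from `s` to `t` that contain the vertex `i`. -/
noncomputable def numSPthrough {V : Type*} [Fintype V] [DecidableEq V] (G : SimpleGraph V)
    [DecidableRel G.Adj] (i s t : V) : ℕ :=
  ((G.finsetWalkLength (G.dist s t) s t).filter (fun w => i ∈ w.support)).card

/-- The adjusted betweenness
`b_i' = (1/((N-1)(N-2))) Σ_{(s,t) : s ≠ t, s ≠ i} σ_{st}(i)/σ_{st}`,
where the sum runs over ordered pairs of distinct vertices whose origin differs from `i`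
(the destination may equal `i`). -/
noncomputable def adjBetweenness {V : Type*} [Fintype V] [DecidableEq V] (G : SimpleGraph V)
    [DecidableRel G.Adj] (i : V) : ℝ :=
  (1 / (((Fintype.card V : ℝ) - 1) * ((Fintype.card V : ℝ) - 2))) *
    ∑ s : V, ∑ t : V,
      if s ≠ t ∧ s ≠ i then (numSPthrough G i s t : ℝ) / (numSP G s t : ℝ) else 0



section Aux
variable {V : Type*} [Fintype V] [DecidableEq V] (G : SimpleGraph V) [DecidableRel G.Adj]

lemma count_tail_eq (s t i : V) (w : G.Walk s t)
    (hw : w ∈ G.finsetWalkLength (G.dist s t) s t) :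
    w.support.tail.count i = if i ∈ w.support ∧ i ≠ s then 1 else 0 := by
  have hlen : w.length = G.dist s t := (SimpleGraph.mem_finsetWalkLength_iff).mp hw
  have hp : w.IsPath := w.isPath_of_length_eq_dist hlen
  have hnd : w.support.Nodup := hp.support_nodup
  have hcons := w.support_eq_cons
  rw [hcons] at hnd
  by_cases h1 : i ∈ w.support.tail
  · have hm : i ∈ w.support := by rw [hcons]; exact List.mem_cons_of_mem _ h1
    have hne : i ≠ s := by
      rintro rfl
      exact (List.nodup_cons.mp hnd).1 h1
    rw [if_pos ⟨hm, hne⟩]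
    exact List.count_eq_one_of_mem (List.nodup_cons.mp hnd).2 h1
  · rw [List.count_eq_zero_of_not_mem h1]
    split_ifs with h
    · exfalso
      obtain ⟨hm, hne⟩ := h
      rw [hcons] at hm
      rcases List.mem_cons.mp hm with rfl | hm'
      · exact hne rfl
      · exact h1 hm'
    · rfl

lemma sum_count_eq (s t i : V) :
    ∑ w ∈ G.finsetWalkLength (G.dist s t) s t, (w.support.tail.count i) =
      if s = i then 0 else numSPthrough G i s t := by
  split_ifs with h
  · subst h
    apply Finset.sum_eq_zero
    intro w hw
    rw [count_tail_eq G s t s w hw, if_neg (by tauto)]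
  · rw [numSPthrough, Finset.card_filter]
    apply Finset.sum_congr rfl
    intro w hw
    rw [count_tail_eq G s t i w hw]
    have : i ≠ s := fun hh => h hh.symm
    simp [this]

lemma numSP_pos (hconn : G.Connected) (s t : V) : 0 < numSP G s t := by
  obtain ⟨w, hw⟩ := hconn.exists_walk_length_eq_dist s t
  exact Finset.card_pos.mpr ⟨w, (SimpleGraph.mem_finsetWalkLength_iff).mpr hw⟩

lemma sum_count_univ (l : List V) : ∑ j : V, l.count j = l.length := by
  rw [← List.sum_toFinset_count_eq_length l]
  exact (Finset.sum_subset (Finset.subset_univ _)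
    (fun x _ hx => List.count_eq_zero_of_not_mem (by simpa using hx))).symm

lemma sum_through (s t : V) :
    ∑ j : V, (if s = j then 0 else numSPthrough G j s t) = numSP G s t * G.dist s t := by
  have key : ∀ j : V, (if s = j then 0 else numSPthrough G j s t) =
      ∑ w ∈ G.finsetWalkLength (G.dist s t) s t, (w.support.tail.count j) :=
    fun j => (sum_count_eq G s t j).symm
  calc ∑ j : V, (if s = j then 0 else numSPthrough G j s t)
      = ∑ j : V, ∑ w ∈ G.finsetWalkLength (G.dist s t) s t, (w.support.tail.count j) := by
        exact Finset.sum_congr rfl fun j _ => key j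
    _ = ∑ w ∈ G.finsetWalkLength (G.dist s t) s t, ∑ j : V, (w.support.tail.count j) :=
        Finset.sum_comm
    _ = ∑ w ∈ G.finsetWalkLength (G.dist s t) s t, G.dist s t := by
        apply Finset.sum_congr rfl
        intro w hw
        have hlen : w.length = G.dist s t := (SimpleGraph.mem_finsetWalkLength_iff).mp hw
        rw [sum_count_univ, List.length_tail, SimpleGraph.Walk.length_support, hlen]
        omega
    _ = numSP G s t * G.dist s t := by rw [Finset.sum_const, numSP, smul_eq_mul]

end Aux

/-- Let `G` be a finite connected simple graph on `N ≥ 3` vertices, and let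
`(s,t)` be a uniformly random ordered pair of distinct vertices, with a uniformly chosen
shortest path between them. For every vertex `i`, the ratio of the expected number of visits of
the path to `i` away from its origin (i.e. the expected count of `i` in the tail of the support
of the path), to the expected length `d(s,t)` of the path, equals `b_i' / Σ_j b_j'`: the
per-trip visit rate of the taxi drive at `i` is the normalized adjusted betweenness of `i`. -/
theorem taxi_visit_rate_eq_normalized_adjBetweenness {V : Type*} [Fintype V] [DecidableEq V]
    (G : SimpleGraph V) [DecidableRel G.Adj] (hconn : G.Connected)
    (hN : 3 ≤ Fintype.card V) (i : V) :
    ((1 / ((Fintype.card V : ℝ) * ((Fintype.card V : ℝ) - 1))) *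
        ∑ s : V, ∑ t : V,
          (if s ≠ t then
            (1 / (numSP G s t : ℝ)) *
              ∑ w ∈ G.finsetWalkLength (G.dist s t) s t, (w.support.tail.count i : ℝ)
          else 0)) /
      ((1 / ((Fintype.card V : ℝ) * ((Fintype.card V : ℝ) - 1))) *
        ∑ s : V, ∑ t : V, (if s ≠ t then (G.dist s t : ℝ) else 0))
    = adjBetweenness G i / ∑ j : V, adjBetweenness G j := by

  classical
  set N : ℝ := (Fintype.card V : ℝ) with hNdef
  have hN3 : (3:ℝ) ≤ N := by rw [hNdef]; exact_mod_cast hN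
  have hc : (1 / (N * (N - 1)) : ℝ) ≠ 0 := by
    apply one_div_ne_zero
    apply mul_ne_zero <;> nlinarith
  have hk : (1 / ((N - 1) * (N - 2)) : ℝ) ≠ 0 := by
    apply one_div_ne_zero
    apply mul_ne_zero <;> nlinarith
  set S : V → ℝ := fun j => ∑ s : V, ∑ t : V,
      if s ≠ t ∧ s ≠ j then (numSPthrough G j s t : ℝ) / (numSP G s t : ℝ) else 0 with hS
  have hnum : ∀ s t : V, s ≠ t →
      (1 / (numSP G s t : ℝ)) *
        ∑ w ∈ G.finsetWalkLength (G.dist s t) s t, (w.support.tail.count i : ℝ) =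
      (if s ≠ i then (numSPthrough G i s t : ℝ) / (numSP G s t : ℝ) else 0) := by
    intro s t hst
    have hcast : ∑ w ∈ G.finsetWalkLength (G.dist s t) s t, (w.support.tail.count i : ℝ) =
        ((if s = i then 0 else numSPthrough G i s t : ℕ) : ℝ) := by
      rw [← sum_count_eq G s t i]
      push_cast
      rfl
    rw [hcast]
    by_cases hsi : s = i
    · simp [hsi]
    · simp only [if_neg hsi, if_pos hsi]
      rw [one_div, inv_mul_eq_div]
  -- numerator identity
  have hNum : (∑ s : V, ∑ t : V,
      (if s ≠ t then
        (1 / (numSP G s t : ℝ)) *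
          ∑ w ∈ G.finsetWalkLength (G.dist s t) s t, (w.support.tail.count i : ℝ)
      else 0)) = S i := by
    rw [hS]
    apply Finset.sum_congr rfl
    intro s _
    apply Finset.sum_congr rfl
    intro t _
    by_cases hst : s = t
    · simp [hst]
    · rw [if_pos hst, hnum s t hst]
      by_cases hsi : s = i
      · simp [hsi]
      · simp [hst, hsi]
  -- denominator identity
  have hden1 : ∀ s t : V, s ≠ t →
      ∑ j : V, (if s ≠ j then (numSPthrough G j s t : ℝ) / (numSP G s t : ℝ) else 0) =
      (G.dist s t : ℝ) := by
    intro s t hst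
    have hpos : (0:ℝ) < (numSP G s t : ℝ) := by exact_mod_cast numSP_pos G hconn s t
    have : ∑ j : V, (if s ≠ j then (numSPthrough G j s t : ℝ) / (numSP G s t : ℝ) else 0)
        = (∑ j : V, (if s = j then (0:ℝ) else (numSPthrough G j s t : ℝ))) / (numSP G s t : ℝ) := by
      rw [Finset.sum_div]
      apply Finset.sum_congr rfl
      intro j _
      by_cases h : s = j <;> simp [h]
    rw [this]
    have hcast : (∑ j : V, (if s = j then (0:ℝ) else (numSPthrough G j s t : ℝ)))
        = ((numSP G s t * G.dist s t : ℕ) : ℝ) := by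
      rw [← sum_through G s t]
      push_cast
      apply Finset.sum_congr rfl
      intro j _
      by_cases h : s = j <;> simp [h]
    rw [hcast]
    push_cast
    field_simp
  have hDen : (∑ j : V, S j) = ∑ s : V, ∑ t : V, (if s ≠ t then (G.dist s t : ℝ) else 0) := by
    simp only [hS]
    rw [Finset.sum_comm]
    apply Finset.sum_congr rfl
    intro s _
    rw [Finset.sum_comm]
    apply Finset.sum_congr rfl
    intro t _
    by_cases hst : s = t
    · simp [hst]
    · rw [if_pos hst, ← hden1 s t hst]
      apply Finset.sum_congr rfl
      intro j _
      by_cases hsj : s = j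
      · simp [hsj]
      · simp [hst, hsj]
  have hadj : ∀ j : V, adjBetweenness G j = (1 / ((N - 1) * (N - 2))) * S j := fun j => rfl
  rw [hNum, ← hDen]
  rw [mul_div_mul_left _ _ hc]
  have : ∑ j : V, adjBetweenness G j = (1 / ((N - 1) * (N - 2))) * ∑ j : V, S j := by
    rw [Finset.mul_sum]
    exact Finset.sum_congr rfl fun j _ => hadj j
  rw [hadj i, this, mul_div_mul_left _ _ hk]
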